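/- arXiv:2007.02316 — 4 statements merged into one kernel-verified Lean document; each statement's English description precedes it below -/
import Mathlib

section
/- Let T, σ > 0, μ > ρ, and let φ_T be the density of N(0,T). Among all measurable f : ℝ → [0,1], the functional F(f) = exp(ρT) + ∫_ℝ φ_T(x) f(x) (exp((μ − σ²/2)T + σx) − exp(ρT)) dx is maximized by f* = indicator of {x : x > (T/σ)(ρ − μ + σ²/2)}, i.e., F(f) ≤ F(f*) for all such f. -/
/-!
Pointwise in `x`, the integrand is `f x` times the excess return
`exp ((μ - σ²/2) T + σ x) - exp (ρ T)` weighted by the Gaussian density. The excess return is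
positive exactly when `x` exceeds `(T/σ)(ρ - μ + σ²/2)`, so putting all wealth in the stock there
and none elsewhere maximizes the integrand for every `x`; integrating the pointwise inequality gives
the claim, since all integrands are dominated by Gaussian-times-exponential functions.
-/

open Real MeasureTheory

lemma integrable_exp_neg_sq_div_mul_exp {T : ℝ} (hT : 0 < T) (a b : ℝ) :
    Integrable fun x : ℝ => exp (-x ^ 2 / (2 * T)) * exp (a + b * x) := by
  -- complete the square
  have h_eq : ∀ x : ℝ, exp (-x ^ 2 / (2 * T)) * exp (a + b * x)
      = exp (a + b ^ 2 * T / 2) * exp (-(1 / (2 * T)) * (x - b * T) ^ 2) := by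
    intro x
    rw [← exp_add, ← exp_add]
    congr 1
    field_simp
    ring
  simp_rw [h_eq]
  exact ((integrable_exp_neg_mul_sq (by positivity)).comp_sub_right (b * T)).const_mul _

lemma integrable_weighted_excess_return {T : ℝ} (hT : 0 < T) (K a b c : ℝ) {h : ℝ → ℝ}
    (hh : Measurable h) (h0 : ∀ x, 0 ≤ h x) (h1 : ∀ x, h x ≤ 1) :
    Integrable fun x : ℝ => K * exp (-x ^ 2 / (2 * T)) * h x * (exp (a + b * x) - exp c) := by
  have h_payoff : Integrable fun x : ℝ =>
      K * (exp (-x ^ 2 / (2 * T)) * exp (a + b * x) - exp (-x ^ 2 / (2 * T)) * exp (c + 0 * x)) :=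
    ((integrable_exp_neg_sq_div_mul_exp hT a b).sub
      (integrable_exp_neg_sq_div_mul_exp hT c 0)).const_mul K
  refine (h_payoff.bdd_mul (c := 1) hh.aestronglyMeasurable
    (ae_of_all _ fun x => abs_le.2 ⟨by linarith [h0 x], h1 x⟩)).congr
    (ae_of_all _ fun x => ?_)
  simp only [zero_mul, add_zero]
  ring

lemma mul_le_ite_mul {t d : ℝ} (p : Prop) [Decidable p] (ht0 : 0 ≤ t) (ht1 : t ≤ 1)
    (hp : p → 0 ≤ d) (hnp : ¬p → d ≤ 0) :
    t * d ≤ (if p then 1 else 0) * d := by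
  split_ifs with h
  · nlinarith [hp h]
  · nlinarith [hnp h]

lemma threshold_lt_iff {T σ ρ μ x : ℝ} (hσ : 0 < σ) :
    T / σ * (ρ - μ + σ ^ 2 / 2) < x ↔ ρ * T < (μ - σ ^ 2 / 2) * T + σ * x := by
  rw [div_mul_eq_mul_div, div_lt_iff₀ hσ]
  constructor <;> intro h <;> linarith

theorem stmt_4_general (T σ ρ μ : ℝ) (hT : 0 < T) (hσ : 0 < σ)
    (f : ℝ → ℝ) (hf : Measurable f) (hf0 : ∀ x, 0 ≤ f x) (hf1 : ∀ x, f x ≤ 1) :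
    Real.exp (ρ * T) +
      (∫ x : ℝ, (Real.sqrt (2 * Real.pi * T))⁻¹ * Real.exp (-x ^ 2 / (2 * T)) * f x *
        (Real.exp ((μ - σ ^ 2 / 2) * T + σ * x) - Real.exp (ρ * T))) ≤
    Real.exp (ρ * T) +
      ∫ x : ℝ, (Real.sqrt (2 * Real.pi * T))⁻¹ * Real.exp (-x ^ 2 / (2 * T)) *
        (if (T / σ) * (ρ - μ + σ ^ 2 / 2) < x then (1 : ℝ) else 0) *
        (Real.exp ((μ - σ ^ 2 / 2) * T + σ * x) - Real.exp (ρ * T)) := by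
  set p : ℝ → Prop := fun x => T / σ * (ρ - μ + σ ^ 2 / 2) < x
  have hf_opt : Measurable fun x => if p x then (1 : ℝ) else 0 :=
    Measurable.ite measurableSet_Ioi measurable_const measurable_const
  rw [add_le_add_iff_left]
  refine integral_mono
    (integrable_weighted_excess_return hT _ _ _ _ hf hf0 hf1)
    (integrable_weighted_excess_return hT _ _ _ _ hf_opt
      (fun x => by split_ifs <;> norm_num) (fun x => by split_ifs <;> norm_num)) fun x => ?_
  have h_bang_bang := mul_le_ite_mul (p x) (hf0 x) (hf1 x)
    (d := exp ((μ - σ ^ 2 / 2) * T + σ * x) - exp (ρ * T))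
    (fun h => sub_nonneg.2 (exp_le_exp.2 ((threshold_lt_iff hσ).1 h).le))
    (fun h => sub_nonpos.2 (exp_le_exp.2 (not_lt.1 (mt (threshold_lt_iff hσ).2 h))))
  have h_weight : 0 ≤ (√(2 * π * T))⁻¹ * exp (-x ^ 2 / (2 * T)) := by positivity
  simpa only [mul_assoc] using mul_le_mul_of_nonneg_left h_bang_bang h_weight

theorem stmt_4 (T σ ρ μ : ℝ) (hT : 0 < T) (hσ : 0 < σ) (hρμ : ρ < μ)
    (f : ℝ → ℝ) (hf : Measurable f) (hf0 : ∀ x, 0 ≤ f x) (hf1 : ∀ x, f x ≤ 1) :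
    Real.exp (ρ * T) +
      (∫ x : ℝ, (Real.sqrt (2 * Real.pi * T))⁻¹ * Real.exp (-x ^ 2 / (2 * T)) * f x *
        (Real.exp ((μ - σ ^ 2 / 2) * T + σ * x) - Real.exp (ρ * T))) ≤
    Real.exp (ρ * T) +
      ∫ x : ℝ, (Real.sqrt (2 * Real.pi * T))⁻¹ * Real.exp (-x ^ 2 / (2 * T)) *
        (if (T / σ) * (ρ - μ + σ ^ 2 / 2) < x then (1 : ℝ) else 0) *
        (Real.exp ((μ - σ ^ 2 / 2) * T + σ * x) - Real.exp (ρ * T)) :=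
  stmt_4_general T σ ρ μ hT hσ f hf hf0 hf1
end

section
/- Let T > 0, σ > 0, μ > ρ, and B(T) ~ N(0,T). For measurable f : ℝ → [0,1], define M̄(f) = exp(ρT)(1 − E[f(B(T))]) + exp((μ − σ²/2)T)·E[f(B(T) − σT) exp(σB(T))]. Then M̄(f) = exp(ρT) + (exp(μT) − exp(ρT))·E[f(B(T))]. -/
/-!
Completing the square, `exp (σ x)` times the `N(0, T)` density is `exp (σ² T / 2)` times the
`N(σ T, T)` density, and shifting back by `σ T` turns `E[f(B(T) − σT) exp(σB(T))]` into
`exp (σ² T / 2) E[f(B(T))]`. The drift correction `exp (−σ² T / 2)` cancels this factor, which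
leaves an expression affine in `E[f(B(T))]`.
-/

open MeasureTheory ProbabilityTheory
open scoped NNReal

namespace ProbabilityTheory

lemma gaussianPDFReal_mul_exp (m : ℝ) (v : ℝ≥0) (s x : ℝ) :
    gaussianPDFReal m v x * Real.exp (s * x) =
      Real.exp (s * m + s ^ 2 * v / 2) * gaussianPDFReal (m + s * v) v x := by
  rcases eq_or_ne v 0 with rfl | hv
  · simp
  have hv' : (v : ℝ) ≠ 0 := NNReal.coe_ne_zero.mpr hv
  have h_square : -(x - m) ^ 2 / (2 * v) + s * x =
      s * m + s ^ 2 * v / 2 + -(x - (m + s * v)) ^ 2 / (2 * v) := by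
    field_simp
    ring
  simp only [gaussianPDFReal]
  rw [mul_assoc, ← Real.exp_add, h_square, Real.exp_add]
  ring

lemma integral_mul_exp_gaussianReal (m : ℝ) (v : ℝ≥0) (s : ℝ) (g : ℝ → ℝ) :
    ∫ x, g x * Real.exp (s * x) ∂gaussianReal m v =
      Real.exp (s * m + s ^ 2 * v / 2) * ∫ x, g x ∂gaussianReal (m + s * v) v := by
  rcases eq_or_ne v 0 with rfl | hv
  · simp [gaussianReal_zero_var, mul_comm]
  simp only [integral_gaussianReal_eq_integral_smul hv, smul_eq_mul, ← integral_const_mul]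
  congr 1 with x
  linear_combination g x * gaussianPDFReal_mul_exp m v s x

lemma integral_comp_sub_gaussianReal (m c : ℝ) (v : ℝ≥0) (g : ℝ → ℝ) :
    ∫ x, g (x - c) ∂gaussianReal (m + c) v = ∫ x, g x ∂gaussianReal m v := by
  rw [← gaussianReal_map_add_const c]
  simpa using integral_map_equiv (MeasurableEquiv.addRight c) (fun y ↦ g (y - c))

lemma integral_comp_sub_mul_exp_gaussianReal (m : ℝ) (v : ℝ≥0) (s : ℝ) (g : ℝ → ℝ) :
    ∫ x, g (x - s * v) * Real.exp (s * x) ∂gaussianReal m v =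
      Real.exp (s * m + s ^ 2 * v / 2) * ∫ x, g x ∂gaussianReal m v := by
  rw [integral_mul_exp_gaussianReal, integral_comp_sub_gaussianReal]

end ProbabilityTheory

theorem stmt_6_general (T σ ρ μ : ℝ) (hT : 0 < T)
    (f : ℝ → ℝ) :
    Real.exp (ρ * T) * (1 - ∫ x, f x ∂(gaussianReal 0 ⟨T, hT.le⟩)) +
      Real.exp ((μ - σ ^ 2 / 2) * T) *
        ∫ x, f (x - σ * T) * Real.exp (σ * x) ∂(gaussianReal 0 ⟨T, hT.le⟩) =
    Real.exp (ρ * T) +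
      (Real.exp (μ * T) - Real.exp (ρ * T)) * ∫ x, f x ∂(gaussianReal 0 ⟨T, hT.le⟩) := by
  have h_tilt : ∫ x, f (x - σ * T) * Real.exp (σ * x) ∂(gaussianReal 0 ⟨T, hT.le⟩) =
      Real.exp (σ * 0 + σ ^ 2 * T / 2) * ∫ x, f x ∂(gaussianReal 0 ⟨T, hT.le⟩) :=
    integral_comp_sub_mul_exp_gaussianReal 0 ⟨T, hT.le⟩ σ f
  have h_exponent : (μ - σ ^ 2 / 2) * T + (σ * 0 + σ ^ 2 * T / 2) = μ * T := by ring
  rw [h_tilt, ← mul_assoc, ← Real.exp_add, h_exponent]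
  ring

theorem stmt_6 (T σ ρ μ : ℝ) (hT : 0 < T) (hσ : 0 < σ) (hρμ : ρ < μ)
    (f : ℝ → ℝ) (hf : Measurable f) (hf0 : ∀ x, 0 ≤ f x) (hf1 : ∀ x, f x ≤ 1) :
    Real.exp (ρ * T) * (1 - ∫ x, f x ∂(gaussianReal 0 ⟨T, hT.le⟩)) +
      Real.exp ((μ - σ ^ 2 / 2) * T) *
        ∫ x, f (x - σ * T) * Real.exp (σ * x) ∂(gaussianReal 0 ⟨T, hT.le⟩) =
    Real.exp (ρ * T) +
      (Real.exp (μ * T) - Real.exp (ρ * T)) * ∫ x, f x ∂(gaussianReal 0 ⟨T, hT.le⟩) :=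
  stmt_6_general T σ ρ μ hT f
end

section
/- Let T, σ > 0 and μ > ρ. Then Φ((σ² + 2ρ − 2μ)√T/(2σ))·exp(ρT) + Φ((σ² − 2ρ + 2μ)√T/(2σ))·exp(μT) > exp(μT), where Φ is the standard normal cumulative distribution function. -/
noncomputable def stdNormalCDF (z : ℝ) : ℝ :=
  ∫ s in Set.Iic z, (Real.sqrt (2 * Real.pi))⁻¹ * Real.exp (-s ^ 2 / 2)

/-!
With `u = σ√T/2` and `v = (μ - ρ)√T/σ` the claim is `e^{2uv} (1 - Φ(u + v)) < Φ(u - v)`.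
Reflecting at `u` maps the tail `(u + v, ∞)` onto `(-∞, u - v]`, and the reflected standard
normal density satisfies `φ(2u - t) = e^{2u(t - u)} φ(t)`, which is `< e^{-2uv} φ(t)`
for `t < u - v`.
-/

open MeasureTheory ProbabilityTheory Real Set

theorem integral_Iic_comp_sub_left {E : Type*} [NormedAddCommGroup E] [NormedSpace ℝ E]
    (f : ℝ → E) (a b : ℝ) : ∫ t in Iic b, f (a - t) = ∫ s in Ioi (a - b), f s := by
  rw [← integral_Ici_eq_integral_Ioi, ← image_const_sub_Iic]
  exact ((Measure.measurePreserving_sub_left volume a).setIntegral_image_emb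
    (MeasurableEquiv.subLeft a).measurableEmbedding f _).symm

theorem setIntegral_Iic_lt_of_lt {f g : ℝ → ℝ} {c : ℝ} (hf : IntegrableOn f (Iic c))
    (hg : IntegrableOn g (Iic c)) (hlt : ∀ t < c, f t < g t) :
    ∫ t in Iic c, f t < ∫ t in Iic c, g t := by
  rw [← sub_pos, ← integral_sub hg hf]
  have hnonneg : 0 ≤ᵐ[volume.restrict (Iic c)] (g - f) := by
    rw [← restrict_Iio_eq_restrict_Iic]
    filter_upwards [ae_restrict_mem measurableSet_Iio] with t ht
    exact sub_nonneg.2 (hlt t ht).le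
  refine (setIntegral_pos_iff_support_of_nonneg_ae hnonneg (hg.sub hf)).2 ?_
  calc (0 : ENNReal) < volume (Iio c) := by simp
    _ ≤ volume (Function.support (g - f) ∩ Iic c) :=
      measure_mono fun t ht => ⟨(sub_pos.2 (hlt t ht)).ne', Iio_subset_Iic_self ht⟩

theorem stdNormalCDF_eq (z : ℝ) : stdNormalCDF z = ∫ s in Iic z, gaussianPDFReal 0 1 s := by
  simp [stdNormalCDF, gaussianPDFReal]

theorem stdNormalCDF_add_integral_Ioi (z : ℝ) :
    stdNormalCDF z + ∫ s in Ioi z, gaussianPDFReal 0 1 s = 1 := by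
  rw [stdNormalCDF_eq, intervalIntegral.integral_Iic_add_Ioi
    (integrable_gaussianPDFReal 0 1).integrableOn (integrable_gaussianPDFReal 0 1).integrableOn,
    integral_gaussianPDFReal_eq_one 0 one_ne_zero]

theorem gaussianPDFReal_zero_one_two_mul_sub (a t : ℝ) :
    gaussianPDFReal 0 1 (2 * a - t) = exp (2 * a * (t - a)) * gaussianPDFReal 0 1 t := by
  simp only [gaussianPDFReal, NNReal.coe_one, sub_zero]
  rw [mul_left_comm, ← exp_add]
  ring_nf

theorem exp_mul_one_sub_stdNormalCDF_lt {u : ℝ} (hu : 0 < u) (v : ℝ) :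
    exp (2 * u * v) * (1 - stdNormalCDF (u + v)) < stdNormalCDF (u - v) := by
  rw [← stdNormalCDF_add_integral_Ioi (u + v), add_sub_cancel_left,
    show u + v = 2 * u - (u - v) by ring, ← integral_Iic_comp_sub_left, ← integral_const_mul,
    stdNormalCDF_eq]
  refine setIntegral_Iic_lt_of_lt ?_ (integrable_gaussianPDFReal 0 1).integrableOn fun t ht => ?_
  · exact (((integrable_gaussianPDFReal 0 1).comp_sub_left (2 * u)).const_mul _).integrableOn
  · rw [gaussianPDFReal_zero_one_two_mul_sub, ← mul_assoc, ← exp_add]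
    refine mul_lt_of_lt_one_left (gaussianPDFReal_pos 0 1 t one_ne_zero) (exp_lt_one_iff.2 ?_)
    nlinarith

theorem stmt_9_general (T σ ρ μ : ℝ) (hT : 0 < T) (hσ : 0 < σ) :
    Real.exp (μ * T) <
      stdNormalCDF ((σ ^ 2 + 2 * ρ - 2 * μ) * Real.sqrt T / (2 * σ)) * Real.exp (ρ * T) +
      stdNormalCDF ((σ ^ 2 - 2 * ρ + 2 * μ) * Real.sqrt T / (2 * σ)) * Real.exp (μ * T) := by
  set u := σ * √T / 2
  set v := (μ - ρ) * √T / σ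
  have hu : 0 < u := by positivity
  have huv : 2 * u * v = (μ - ρ) * T := by
    simp only [u, v]
    field_simp
    rw [sq_sqrt hT.le, mul_comm]
  have hexp : exp (μ * T) = exp (2 * u * v) * exp (ρ * T) := by
    rw [huv, ← exp_add]; ring_nf
  have hminus : (σ ^ 2 + 2 * ρ - 2 * μ) * √T / (2 * σ) = u - v := by
    simp only [u, v]; field_simp; ring
  have hplus : (σ ^ 2 - 2 * ρ + 2 * μ) * √T / (2 * σ) = u + v := by
    simp only [u, v]; field_simp; ring
  rw [hminus, hplus]
  have key := mul_lt_mul_of_pos_right (exp_mul_one_sub_stdNormalCDF_lt hu v) (exp_pos (ρ * T))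
  rw [hexp]
  linarith

theorem stmt_9 (T σ ρ μ : ℝ) (hT : 0 < T) (hσ : 0 < σ) (hρμ : ρ < μ) :
    Real.exp (μ * T) <
      stdNormalCDF ((σ ^ 2 + 2 * ρ - 2 * μ) * Real.sqrt T / (2 * σ)) * Real.exp (ρ * T) +
      stdNormalCDF ((σ ^ 2 - 2 * ρ + 2 * μ) * Real.sqrt T / (2 * σ)) * Real.exp (μ * T) :=
  stmt_9_general T σ ρ μ hT hσ
end

section
/- Let T, σ > 0, μ > ρ, and B(T) ~ N(0,T). With f* = 1_{x > (T/σ)(ρ − μ + σ²/2)}, the random variable M^{(RV)} = (1 − f*(B(T)))·exp(ρT) + f*(B(T))·exp((μ − σ²/2)T + σB(T)) satisfies M^{(RV)} ≥ W almost surely for every random variable of the form W = (1 − f(B(T)))·exp(ρT) + f(B(T))·exp((μ − σ²/2)T + σB(T)) with measurable f : ℝ → [0,1]. -/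
open MeasureTheory ProbabilityTheory

theorem stmt_18 (T σ ρ μ : ℝ) (hT : 0 < T) (hσ : 0 < σ) (hρμ : ρ < μ)
    (f : ℝ → ℝ) (hf : Measurable f) (hf0 : ∀ x, 0 ≤ f x) (hf1 : ∀ x, f x ≤ 1) :
    ∀ᵐ x ∂(gaussianReal 0 ⟨T, hT.le⟩),
      (1 - f x) * Real.exp (ρ * T) + f x * Real.exp ((μ - σ ^ 2 / 2) * T + σ * x) ≤
      (1 - (if (T / σ) * (ρ - μ + σ ^ 2 / 2) < x then (1 : ℝ) else 0)) * Real.exp (ρ * T) +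
        (if (T / σ) * (ρ - μ + σ ^ 2 / 2) < x then (1 : ℝ) else 0) *
          Real.exp ((μ - σ ^ 2 / 2) * T + σ * x) := by
  refine Filter.Eventually.of_forall fun x => ?_
  split_ifs with h
  · have hx : σ * x > T * (ρ - μ + σ ^ 2 / 2) := by
      have := (div_lt_iff₀ hσ).mp (by rwa [div_mul_eq_mul_div] at h)
      linarith [this]
    have hexp : Real.exp (ρ * T) ≤ Real.exp ((μ - σ ^ 2 / 2) * T + σ * x) := by
      apply Real.exp_le_exp.mpr; nlinarith
    nlinarith [hf0 x, hf1 x]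
  · push_neg at h
    have hx : σ * x ≤ T * (ρ - μ + σ ^ 2 / 2) := by
      have h2 := mul_le_mul_of_nonneg_left h hσ.le
      rw [show σ * (T / σ * (ρ - μ + σ ^ 2 / 2)) = T * (ρ - μ + σ ^ 2 / 2) by field_simp] at h2
      linarith
    have hexp : Real.exp ((μ - σ ^ 2 / 2) * T + σ * x) ≤ Real.exp (ρ * T) := by
      apply Real.exp_le_exp.mpr; nlinarith
    nlinarith [hf0 x, hf1 x]
end
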